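/- Let n be a natural number and let T be a computable tree over Fin n, i.e., membership in T is a decidable-by-algorithm (computable) predicate on List (Fin n). If f is an isolated infinite path of T — that is, there exists k such that f is the unique infinite path of T extending the initial segment of f of length k — then the function f : ℕ → Fin n is computable. -/

import Mathlib

/-- The initial segment (f 0, …, f (k-1)) of an infinite sequence f. -/
def initSeg {n : ℕ} (f : ℕ → Fin n) (k : ℕ) : List (Fin n) :=
  List.ofFn (fun i : Fin k => f i)

/-- A tree over `Fin n`: a set of finite strings closed under taking prefixes. -/
def IsTree {n : ℕ} (T : Set (List (Fin n))) : Prop :=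
  ∀ σ ∈ T, ∀ τ, τ <+: σ → τ ∈ T

/-- `f` is an infinite path of `T`: every initial segment of `f` belongs to `T`. -/
def IsPath {n : ℕ} (T : Set (List (Fin n))) (f : ℕ → Fin n) : Prop :=
  ∀ k : ℕ, initSeg f k ∈ T

/-!
Let `δ` be the initial segment of `f` of length `k` witnessing isolation, and fix a position `m`.
The sequences extending `δ` whose initial segment of length `L` lies in `T` and which differ from
`f` at `m` form closed sets decreasing in `L`; a common point would be a path of `T` through `δ`
other than `f`, so by compactness of `ℕ → Fin n` one of them is empty. Hence for some `L` every
string of `T` extending `δ` by `L` letters has `f m` at position `m`: a finite, decidable condition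
on the pair `(L, f m)`. Searching for any pair `(L, a)` satisfying it computes `f m`, because the
initial segment of `f` of length `k + L` is among the strings inspected, which forces `a = f m`.
-/

namespace Computable

variable {α β σ : Type*} [Primcodable α] [Primcodable β] [Primcodable σ]

theorem nat_iterate {f : α → ℕ} {g : α → β} {h : α → β → β} (hf : Computable f)
    (hg : Computable g) (hh : Computable₂ h) : Computable fun a => (h a)^[f a] (g a) :=
  (nat_rec hf hg (hh.comp fst (snd.comp snd)).to₂).of_eq fun a => by
    induction f a <;> simp [*, -Function.iterate_succ, Function.iterate_succ']

theorem list_foldl {f : α → List β} {g : α → σ} {h : α → σ × β → σ} (hf : Computable f)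
    (hg : Computable g) (hh : Computable₂ h) :
    Computable fun a => (f a).foldl (fun s b => h a (s, b)) (g a) := by
  -- `G` moves the head of the pending list into the accumulator
  let G (a : α) (p : σ × List β) : σ × List β :=
    (Option.casesOn p.2.head? p.1 fun b => h a (p.1, b), p.2.tail)
  have hG : Computable₂ G :=
    (pair (option_casesOn (Primrec.list_head?.to_comp.comp (snd.comp snd)) (fst.comp snd)
      (hh.comp (fst.comp fst) (pair (fst.comp (snd.comp fst)) snd)).to₂)
      (Primrec.list_tail.to_comp.comp (snd.comp snd))).to₂
  have key : ∀ a (l : List β) x,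
      ((G a)^[l.length] (x, l)).1 = l.foldl (fun s b => h a (s, b)) x := by
    intro a l
    induction l with
    | nil => intro x; rfl
    | cons b l ih => intro x; exact ih _
  exact (fst.comp (nat_iterate (list_length.comp hf) (pair hg hf) hG)).of_eq
    fun a => key a (f a) (g a)

theorem list_all {f : α → List β} {p : α → β → Bool} (hf : Computable f) (hp : Computable₂ p) :
    Computable fun a => (f a).all (p a) := by
  have key : ∀ a (l : List β) s, l.foldl (fun s b => s && p a b) s = (s && l.all (p a)) := by
    intro a l
    induction l with
    | nil => simp
    | cons b l ih => intro s; simp [ih, Bool.and_assoc]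
  exact (list_foldl hf (const true)
    (Primrec.and.to_comp.comp (fst.comp snd) (hp.comp fst (snd.comp snd))).to₂).of_eq
    fun a => by simp [key]

end Computable

theorem Nat.mem_rfindOpt_of_unique {α : Type*} {F : ℕ → Option α} {b : α}
    (hex : ∃ j, b ∈ F j) (huniq : ∀ j a, a ∈ F j → a = b) : b ∈ Nat.rfindOpt F := by
  obtain ⟨j, hj⟩ := hex
  obtain ⟨a, ha⟩ := Part.dom_iff_mem.1 (Nat.rfindOpt_dom.2 ⟨j, b, hj⟩)
  obtain ⟨i, hi⟩ := Nat.rfindOpt_spec ha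
  rwa [huniq i a hi] at ha

section Trees

variable {n : ℕ}

theorem length_initSeg (f : ℕ → Fin n) (k : ℕ) : (initSeg f k).length = k := by
  simp [initSeg]

theorem getElem?_initSeg (f : ℕ → Fin n) (k m : ℕ) :
    (initSeg f k)[m]? = if m < k then some (f m) else none := by
  simp [initSeg, List.getElem?_ofFn]

theorem take_initSeg (f : ℕ → Fin n) {j k : ℕ} (h : j ≤ k) :
    (initSeg f k).take j = initSeg f j := by
  ext m : 1
  simp only [List.getElem?_take, getElem?_initSeg]
  split_ifs <;> first | rfl | omega

theorem initSeg_prefix_initSeg (f : ℕ → Fin n) {j k : ℕ} (h : j ≤ k) :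
    initSeg f j <+: initSeg f k :=
  take_initSeg f h ▸ List.take_prefix _ _

theorem initSeg_getD_length (σ : List (Fin n)) (f : ℕ → Fin n) :
    initSeg (fun i => σ.getD i (f i)) σ.length = σ := by
  ext m : 1
  simp only [getElem?_initSeg, List.getD_eq_getElem?_getD]
  split_ifs with h
  · simp [h]
  · simp [List.getElem?_eq_none (not_lt.1 h)]

theorem isClosed_setOf_initSeg (p : List (Fin n) → Prop) (k : ℕ) :
    IsClosed {g : ℕ → Fin n | p (initSeg g k)} :=
  (isClosed_discrete {x : Fin k → Fin n | p (List.ofFn x)}).preimage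
    (by fun_prop : Continuous fun (g : ℕ → Fin n) (i : Fin k) => g i)

theorem exists_forall_getElem?_eq_of_isolated {T : Set (List (Fin n))} (hT : IsTree T)
    {f : ℕ → Fin n} {k : ℕ} (hiso : ∀ g, IsPath T g → initSeg g k = initSeg f k → g = f)
    (m : ℕ) : ∃ L, ∀ σ ∈ T, L ≤ σ.length → initSeg f k <+: σ → σ[m]? = some (f m) := by
  by_contra! hbad
  let C (L : ℕ) : Set (ℕ → Fin n) :=
    {g | initSeg g L ∈ T} ∩ {g | initSeg g k = initSeg f k} ∩ {g | g m ≠ f m}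
  have hC_closed (L : ℕ) : IsClosed (C L) :=
    ((isClosed_setOf_initSeg (· ∈ T) L).inter (isClosed_setOf_initSeg (· = initSeg f k) k)).inter
      ((isClosed_discrete {x | x ≠ f m}).preimage (continuous_apply (A := fun _ => Fin n) m))
  have hC_anti (L : ℕ) : C (L + 1) ⊆ C L := fun g ⟨⟨hL, hk⟩, hm⟩ =>
    ⟨⟨hT _ hL _ (initSeg_prefix_initSeg g L.le_succ), hk⟩, hm⟩
  have hC_nonempty (L : ℕ) : (C L).Nonempty := by
    obtain ⟨σ, hσT, hLσ, hkσ, hmσ⟩ := hbad (max L (m + 1))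
    set g : ℕ → Fin n := fun i => σ.getD i (f i)
    have hgσ : initSeg g σ.length = σ := initSeg_getD_length σ f
    have hkσ' : k ≤ σ.length := by simpa [length_initSeg] using hkσ.length_le
    refine ⟨g, ⟨?_, ?_⟩, ?_⟩
    · exact hT σ hσT _ (hgσ ▸ initSeg_prefix_initSeg g (le_of_max_le_left hLσ))
    · show initSeg g k = _
      rw [← take_initSeg g hkσ', hgσ, List.prefix_iff_eq_take.1 hkσ, length_initSeg]
    · intro hgm
      have := getElem?_initSeg g σ.length m
      rw [hgσ, if_pos (by omega), hgm] at this
      exact hmσ this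
  obtain ⟨g, hg⟩ := IsCompact.nonempty_iInter_of_sequence_nonempty_isCompact_isClosed C hC_anti
    hC_nonempty (hC_closed 0).isCompact hC_closed
  rw [Set.mem_iInter] at hg
  exact (hg 0).2 (congrFun (hiso g (fun L => (hg L).1.1) (hg 0).1.2) m)

def words (n : ℕ) : ℕ → List (List (Fin n))
  | 0 => [[]]
  | L + 1 => (words n L).flatMap fun w => (List.finRange n).map (· :: w)

theorem mem_words {L : ℕ} {w : List (Fin n)} : w ∈ words n L ↔ w.length = L := by
  induction L generalizing w with
  | zero => simp [words]
  | succ L ih => cases w <;> simp [words, ih]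

theorem primrec_words : Primrec (words n) :=
  (Primrec.nat_rec₁ [[]] (Primrec.list_flatMap Primrec.snd (Primrec.list_map
    (Primrec.const (List.finRange n)) (Primrec.list_cons.comp Primrec.snd
      (Primrec.snd.comp Primrec.fst)).to₂).to₂).to₂).of_eq fun L => by
    induction L <;> simp [words, *]

def levelTest (c : List (Fin n) → Bool) (δ : List (Fin n)) (m : ℕ) (p : ℕ × Fin n) : Bool :=
  (words n p.1).all fun w => !c (δ ++ w) || decide ((δ ++ w)[m]? = some p.2)

theorem levelTest_eq_true {c : List (Fin n) → Bool} {δ : List (Fin n)} {m L : ℕ} {a : Fin n} :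
    levelTest c δ m (L, a) = true ↔
      ∀ w : List (Fin n), w.length = L → c (δ ++ w) = true → (δ ++ w)[m]? = some a := by
  simp [levelTest, mem_words, imp_iff_not_or]

theorem eq_of_levelTest {c : List (Fin n) → Bool} {f : ℕ → Fin n} (hf : ∀ L, c (initSeg f L))
    {k m L : ℕ} {a : Fin n} (h : levelTest c (initSeg f k) m (L, a) = true) : a = f m := by
  have hsplit : initSeg f k ++ (initSeg f (k + L)).drop k = initSeg f (k + L) := by
    rw [← take_initSeg f (k.le_add_right L), List.take_append_drop]
  have := levelTest_eq_true.1 h _ (by simp [length_initSeg]) (hsplit ▸ hf (k + L))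
  rw [hsplit, getElem?_initSeg] at this
  split_ifs at this
  exact (Option.some_inj.1 this).symm

def pathSearch (c : List (Fin n) → Bool) (δ : List (Fin n)) (m j : ℕ) : Option (Fin n) :=
  (Encodable.decode j : Option (ℕ × Fin n)).bind fun p => bif levelTest c δ m p then some p.2 else none

theorem exists_pathSearch_eq_some_iff {c : List (Fin n) → Bool} {δ : List (Fin n)} {m : ℕ}
    {a : Fin n} : (∃ j, pathSearch c δ m j = some a) ↔ ∃ L, levelTest c δ m (L, a) = true := by
  constructor
  · rintro ⟨j, hj⟩
    simp only [pathSearch, Option.bind_eq_some_iff] at hj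
    obtain ⟨⟨L, b⟩, -, hb⟩ := hj
    cases h : levelTest c δ m (L, b) <;> simp only [h, cond_false, cond_true, reduceCtorEq,
      Option.some_inj] at hb
    exact ⟨L, hb ▸ h⟩
  · rintro ⟨L, hL⟩
    exact ⟨Encodable.encode (L, a), by simp [pathSearch, hL]⟩

theorem computable₂_levelTest {c : List (Fin n) → Bool} (hc : Computable c)
    (δ : List (Fin n)) : Computable₂ (levelTest c δ) := by
  have hext : Computable fun x : (ℕ × ℕ × Fin n) × List (Fin n) => δ ++ x.2 :=
    Primrec.list_append.to_comp.comp (Computable.const δ) Computable.snd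
  have hentry : Computable fun x : (ℕ × ℕ × Fin n) × List (Fin n) =>
      decide ((δ ++ x.2)[x.1.1]? = some x.1.2.2) :=
    Primrec.eq.decide.to_comp.comp (Primrec.list_getElem?.to_comp.comp hext
      (Computable.fst.comp Computable.fst))
      (Computable.option_some.comp (Computable.snd.comp (Computable.snd.comp Computable.fst)))
  have hwords : Computable fun x : ℕ × ℕ × Fin n => words n x.2.1 :=
    primrec_words.to_comp.comp (Computable.fst.comp Computable.snd)
  have hpred : Computable fun x : (ℕ × ℕ × Fin n) × List (Fin n) =>
      (!c (δ ++ x.2) || decide ((δ ++ x.2)[x.1.1]? = some x.1.2.2)) :=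
    Primrec.or.to_comp.comp (Primrec.not.to_comp.comp (hc.comp hext)) hentry
  exact Computable.list_all hwords hpred.to₂

theorem computable₂_pathSearch {c : List (Fin n) → Bool} (hc : Computable c) (δ : List (Fin n)) :
    Computable₂ (pathSearch c δ) :=
  Computable.option_bind (Computable.decode.comp Computable.snd)
    (Computable.cond ((computable₂_levelTest hc δ).comp (Computable.fst.comp Computable.fst)
      Computable.snd) (Computable.option_some.comp (Computable.snd.comp Computable.snd))
      (Computable.const none)).to₂

end Trees

/-- An isolated infinite path of a computable tree is a computable function. -/
theorem isolated_path_computable {n : ℕ} (T : Set (List (Fin n))) (hT : IsTree T)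
    (hTcomp : ComputablePred (· ∈ T)) (f : ℕ → Fin n) (hf : IsPath T f)
    (hiso : ∃ k : ℕ, ∀ g : ℕ → Fin n, IsPath T g → initSeg g k = initSeg f k → g = f) :
    Computable f := by
  obtain ⟨k, hk⟩ := hiso
  obtain ⟨c, hc, hcT⟩ := ComputablePred.computable_iff.1 hTcomp
  have hmem (σ : List (Fin n)) : σ ∈ T ↔ c σ = true := iff_of_eq (congrFun hcT σ)
  refine Partrec.of_eq_tot (Partrec.rfindOpt (computable₂_pathSearch hc (initSeg f k)))
    fun m => Nat.mem_rfindOpt_of_unique ?_ fun j a ha => ?_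
  · obtain ⟨L, hL⟩ := exists_forall_getElem?_eq_of_isolated hT hk m
    refine exists_pathSearch_eq_some_iff.2 ⟨L, levelTest_eq_true.2 fun w hw hcw => ?_⟩
    exact hL _ ((hmem _).2 hcw) (by simp [hw]) (List.prefix_append _ _)
  · obtain ⟨L, hL⟩ := exists_pathSearch_eq_some_iff.1 ⟨j, ha⟩
    exact eq_of_levelTest (fun L => (hmem _).1 (hf L)) hL
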